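/- arXiv:1907.02758 — 3 statements merged into one kernel-verified Lean document; each statement's English description precedes it below -/
import Mathlib

section
/- Let a < b be real numbers and N' ≥ 1 an integer, and let V_{N'} = span{1/√2, cos(kπ(y−a)/(b−a)) : k = 1,…,N'−1} ⊂ L²([a,b]). For r ∈ {1,…,N'} let x_r = a + (2r−1)(b−a)/(2N'). Then ‖ K^wl_{N'}(·, r) / K^wl_{N'}(x_r, r) ‖_{L²([a,b])} = min{ ‖f‖_{L²([a,b])} : f ∈ V_{N'}, f(x_r) = 1 }, i.e., among all functions in V_{N'} taking the value 1 at x_r, the normalized scaling function has minimal norm. -/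
open Real Finset

noncomputable section

/-- The cosine wavelet scaling function
`K^wl_{N'}(x, r) = 1/2 + ∑_{k=1}^{N'−1} cos(kπ(x−a)/(b−a)) cos(kπ(2r−1)/(2N'))`. -/
def Kwl (a b : ℝ) (N' : ℕ) (x : ℝ) (r : ℕ) : ℝ :=
  1 / 2 + ∑ k ∈ Finset.Ico 1 N',
    Real.cos ((k : ℝ) * π * (x - a) / (b - a)) *
      Real.cos ((k : ℝ) * π * (2 * (r : ℝ) - 1) / (2 * (N' : ℝ)))

/-- The inner product `⟨f, g⟩_{L²([a,b])} = (2/(b−a)) ∫_a^b f(y) g(y) dy`. -/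
def ip (a b : ℝ) (f g : ℝ → ℝ) : ℝ := (2 / (b - a)) * ∫ y in a..b, f y * g y

/-- The norm associated with `ip`. -/
def ipNorm (a b : ℝ) (f : ℝ → ℝ) : ℝ := Real.sqrt (ip a b f f)

/-- `V_{N'} = span{1/√2, cos(kπ(y−a)/(b−a)) : k = 1,…,N'−1}`. -/
def Vspace (a b : ℝ) (N' : ℕ) : Submodule ℝ (ℝ → ℝ) :=
  Submodule.span ℝ ({fun _ => 1 / Real.sqrt 2} ∪
    {g | ∃ k ∈ Finset.Ico 1 N', g = fun y => Real.cos ((k : ℝ) * π * (y - a) / (b - a))})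

/-! ### Auxiliary definitions and lemmas -/

/-- The orthonormal family: `E 0` is the constant `1/√2`; `E k` is the `k`-th cosine. -/
def E (a b : ℝ) (k : ℕ) : ℝ → ℝ :=
  if k = 0 then fun _ => 1 / Real.sqrt 2
  else fun y => Real.cos ((k : ℝ) * π * (y - a) / (b - a))

lemma E_cont (a b : ℝ) (k : ℕ) : Continuous (E a b k) := by
  unfold E; split
  · exact continuous_const
  · continuity

lemma integral_cos_linear (a b c d : ℝ) (hc : c ≠ 0) :
    ∫ y in a..b, Real.cos (c * y + d) = (Real.sin (c * b + d) - Real.sin (c * a + d)) / c := by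
  have h : ∀ y ∈ Set.uIcc a b, HasDerivAt (fun y => Real.sin (c * y + d) / c)
      (Real.cos (c * y + d)) y := by
    intro y _
    have h1 : HasDerivAt (fun y : ℝ => c * y + d) c y := by
      simpa using ((hasDerivAt_id y).const_mul c).add_const d
    have h2 := (h1.sin).div_const c
    rwa [mul_div_cancel_right₀ _ hc] at h2
  rw [intervalIntegral.integral_eq_sub_of_hasDerivAt h
    ((Continuous.intervalIntegrable (by continuity) a b))]
  ring

lemma integral_cos_int_mul (a b : ℝ) (hab : a < b) (m : ℤ) :
    (∫ y in a..b, Real.cos ((m : ℝ) * (π * (y - a) / (b - a)))) =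
      if m = 0 then (b - a) else 0 := by
  have hL : b - a ≠ 0 := sub_ne_zero.2 hab.ne'
  by_cases hm : m = 0
  · simp [hm]
  · have hc : (m : ℝ) * π / (b - a) ≠ 0 :=
      div_ne_zero (mul_ne_zero (Int.cast_ne_zero.2 hm) Real.pi_ne_zero) hL
    have key : ∀ y : ℝ, (m : ℝ) * (π * (y - a) / (b - a)) =
        ((m : ℝ) * π / (b - a)) * y + (-((m : ℝ) * π / (b - a)) * a) := by
      intro y; field_simp; ring
    simp only [key]
    rw [integral_cos_linear a b _ _ hc]
    have h1 : ((m : ℝ) * π / (b - a)) * b + (-((m : ℝ) * π / (b - a)) * a) = (m : ℝ) * π := by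
      field_simp; ring
    have h2 : ((m : ℝ) * π / (b - a)) * a + (-((m : ℝ) * π / (b - a)) * a) = 0 := by ring
    rw [h1, h2, Real.sin_int_mul_pi, Real.sin_zero]
    simp [hm]

lemma integral_cos_nat (a b : ℝ) (hab : a < b) (k : ℕ) (hk : k ≠ 0) :
    (∫ y in a..b, Real.cos ((k : ℝ) * π * (y - a) / (b - a))) = 0 := by
  have : ∀ y : ℝ, (k : ℝ) * π * (y - a) / (b - a) = ((k : ℤ) : ℝ) * (π * (y - a) / (b - a)) := by
    intro y; push_cast; ring
  simp only [this]
  rw [integral_cos_int_mul a b hab]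
  simp [hk]

lemma ip_E_E (a b : ℝ) (hab : a < b) (j k : ℕ) :
    ip a b (E a b j) (E a b k) = if j = k then 1 else 0 := by
  have hL : b - a ≠ 0 := sub_ne_zero.2 hab.ne'
  have hs2 : Real.sqrt 2 * Real.sqrt 2 = 2 := Real.mul_self_sqrt (by norm_num)
  unfold ip E
  rcases Nat.eq_zero_or_pos j with hj | hj <;> rcases Nat.eq_zero_or_pos k with hk | hk
  · subst hj; subst hk
    simp only [if_pos rfl, if_true]
    have : ∀ y : ℝ, (1 / Real.sqrt 2) * (1 / Real.sqrt 2) = (1:ℝ)/2 := by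
      intro y; rw [div_mul_div_comm, hs2]; norm_num
    rw [intervalIntegral.integral_congr (fun y _ => this y), intervalIntegral.integral_const]
    simp only [smul_eq_mul]
    field_simp
  · subst hj
    have hk' : k ≠ 0 := hk.ne'
    simp only [if_pos rfl, if_neg hk', if_neg (by omega : ¬ (0 = k)), if_true]
    rw [intervalIntegral.integral_const_mul, integral_cos_nat a b hab k hk']
    simp
  · subst hk
    have hj' : j ≠ 0 := hj.ne'
    simp only [if_pos rfl, if_neg hj', if_neg (by omega : ¬ (j = 0)), if_true]
    have : ∀ y : ℝ, Real.cos ((j : ℝ) * π * (y - a) / (b - a)) * (1 / Real.sqrt 2)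
        = (1 / Real.sqrt 2) * Real.cos ((j : ℝ) * π * (y - a) / (b - a)) := fun y => mul_comm _ _
    rw [intervalIntegral.integral_congr (fun y _ => this y),
      intervalIntegral.integral_const_mul, integral_cos_nat a b hab j hj']
    simp
  · have hj' : j ≠ 0 := hj.ne'
    have hk' : k ≠ 0 := hk.ne'
    simp only [if_neg hj', if_neg hk']
    have key : ∀ y : ℝ, Real.cos ((j : ℝ) * π * (y - a) / (b - a)) *
        Real.cos ((k : ℝ) * π * (y - a) / (b - a))
        = (Real.cos ((((j : ℤ) - k : ℤ) : ℝ) * (π * (y - a) / (b - a)))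
          + Real.cos ((((j : ℤ) + k : ℤ) : ℝ) * (π * (y - a) / (b - a)))) / 2 := by
      intro y
      have h1 : ((((j : ℤ) - k : ℤ) : ℝ)) * (π * (y - a) / (b - a))
          = (j : ℝ) * π * (y - a) / (b - a) - (k : ℝ) * π * (y - a) / (b - a) := by
        push_cast; ring
      have h2 : ((((j : ℤ) + k : ℤ) : ℝ)) * (π * (y - a) / (b - a))
          = (j : ℝ) * π * (y - a) / (b - a) + (k : ℝ) * π * (y - a) / (b - a) := by
        push_cast; ring
      rw [h1, h2, Real.cos_sub, Real.cos_add]; ring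
    rw [intervalIntegral.integral_congr (fun y _ => key y)]
    have hi1 : IntervalIntegrable
        (fun y => Real.cos ((((j : ℤ) - k : ℤ) : ℝ) * (π * (y - a) / (b - a))))
        MeasureTheory.volume a b :=
      Continuous.intervalIntegrable (by continuity) a b
    have hi2 : IntervalIntegrable
        (fun y => Real.cos ((((j : ℤ) + k : ℤ) : ℝ) * (π * (y - a) / (b - a))))
        MeasureTheory.volume a b :=
      Continuous.intervalIntegrable (by continuity) a b
    rw [intervalIntegral.integral_div, intervalIntegral.integral_add hi1 hi2,
      integral_cos_int_mul a b hab, integral_cos_int_mul a b hab]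
    by_cases hjk : j = k
    · subst hjk
      rw [if_pos (by ring), if_neg (by omega)]
      rw [if_pos rfl]
      field_simp
      ring
    · rw [if_neg (by omega), if_neg (by omega), if_neg hjk]
      simp

lemma ip_sum_sum (a b : ℝ) (hab : a < b) (N' : ℕ) (c d : ℕ → ℝ) :
    ip a b (fun y => ∑ k ∈ Finset.range N', c k * E a b k y)
           (fun y => ∑ k ∈ Finset.range N', d k * E a b k y)
      = ∑ k ∈ Finset.range N', c k * d k := by
  unfold ip
  have expand : ∀ y : ℝ, (∑ k ∈ range N', c k * E a b k y) * (∑ k ∈ range N', d k * E a b k y)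
      = ∑ j ∈ range N', ∑ k ∈ range N', (c j * d k) * (E a b j y * E a b k y) := by
    intro y
    rw [Finset.sum_mul_sum]
    refine Finset.sum_congr rfl fun j _ => Finset.sum_congr rfl fun k _ => by ring
  rw [intervalIntegral.integral_congr (fun y _ => expand y)]
  rw [intervalIntegral.integral_finset_sum (fun j _ => ?_)]
  swap
  · exact Continuous.intervalIntegrable (by
      exact continuous_finset_sum _ fun k _ =>
        continuous_const.mul ((E_cont a b j).mul (E_cont a b k))) a b
  have inner : ∀ j ∈ range N',
      (∫ y in a..b, ∑ k ∈ range N', (c j * d k) * (E a b j y * E a b k y))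
      = ∑ k ∈ range N', (c j * d k) * ∫ y in a..b, E a b j y * E a b k y := by
    intro j _
    rw [intervalIntegral.integral_finset_sum (f := fun k y => (c j * d k) * (E a b j y * E a b k y)) (fun k _ =>
      Continuous.intervalIntegrable (continuous_const.mul ((E_cont a b j).mul (E_cont a b k))) a b)]
    exact Finset.sum_congr rfl fun k _ => intervalIntegral.integral_const_mul _ _
  rw [Finset.sum_congr rfl inner, Finset.mul_sum]
  have step : ∀ j ∈ range N',
      (2 / (b - a)) * ∑ k ∈ range N', (c j * d k) * ∫ y in a..b, E a b j y * E a b k y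
      = ∑ k ∈ range N', (c j * d k) * ip a b (E a b j) (E a b k) := by
    intro j _
    rw [Finset.mul_sum]
    exact Finset.sum_congr rfl fun k _ => by unfold ip; ring
  rw [Finset.sum_congr rfl step]
  simp only [ip_E_E a b hab, mul_ite, mul_one, mul_zero]
  rw [Finset.sum_comm]
  refine Finset.sum_congr rfl fun k hk => ?_
  rw [Finset.sum_ite_eq' (range N') k (fun j => c j * d k)]
  simp [Finset.mem_range.1 hk]

lemma Vspace_eq (a b : ℝ) (N' : ℕ) (hN' : 1 ≤ N') :
    Vspace a b N' = Submodule.span ℝ (Set.range fun i : Fin N' => E a b i) := by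
  unfold Vspace
  congr 1
  ext g
  constructor
  · rintro (hg | ⟨k, hk, rfl⟩)
    · have hg' : g = fun _ => 1 / Real.sqrt 2 := hg
      exact ⟨⟨0, hN'⟩, by simp [E, hg']⟩
    · have hk1 := Finset.mem_Ico.1 hk
      exact ⟨⟨k, hk1.2⟩, by simp [E, Nat.one_le_iff_ne_zero.1 hk1.1]⟩
  · rintro ⟨i, rfl⟩
    by_cases hi : (i : ℕ) = 0
    · left; simp [E, hi]
    · right
      exact ⟨(i : ℕ), Finset.mem_Ico.2 ⟨Nat.one_le_iff_ne_zero.2 hi, i.2⟩, by simp [E, hi]⟩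

lemma mem_V_iff (a b : ℝ) (N' : ℕ) (hN' : 1 ≤ N') (f : ℝ → ℝ) :
    f ∈ Vspace a b N' ↔ ∃ c : Fin N' → ℝ, (∑ i : Fin N', c i • E a b i) = f := by
  rw [Vspace_eq a b N' hN']
  exact Submodule.mem_span_range_iff_exists_fun ℝ

lemma Kwl_eq_sum (a b : ℝ) (N' : ℕ) (hN' : 1 ≤ N') (r : ℕ) (x xr : ℝ)
    (hx : ∀ k : ℕ, k ≠ 0 → Real.cos ((k : ℝ) * π * (xr - a) / (b - a))
      = Real.cos ((k : ℝ) * π * (2 * (r : ℝ) - 1) / (2 * (N' : ℝ)))) :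
    Kwl a b N' x r = ∑ k ∈ Finset.range N', E a b k xr * E a b k x := by
  have hs2 : Real.sqrt 2 * Real.sqrt 2 = 2 := Real.mul_self_sqrt (by norm_num)
  rw [Finset.range_eq_Ico, Finset.sum_eq_sum_Ico_succ_bot (by omega : 0 < N')]
  unfold Kwl
  congr 1
  · simp only [E, if_pos rfl, if_true]
    rw [div_mul_div_comm, hs2]; norm_num
  · refine Finset.sum_congr rfl fun k hk => ?_
    have hk0 : k ≠ 0 := by have := (Finset.mem_Ico.1 hk).1; omega
    simp only [E, if_neg hk0]
    rw [hx k hk0, mul_comm]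

/-- among all functions in `V_{N'}` taking the value 1 at
`x_r = a + (2r−1)(b−a)/(2N')`, the normalized scaling function
`K^wl_{N'}(·, r) / K^wl_{N'}(x_r, r)` has minimal `L²([a,b])` norm, and its norm is the
minimum of the set of such norms. -/
theorem stmt13 (a b : ℝ) (hab : a < b) (N' : ℕ) (hN' : 1 ≤ N') (r : ℕ)
    (hr : 1 ≤ r) (hr' : r ≤ N')
    (xr : ℝ) (hxr : xr = a + (2 * (r : ℝ) - 1) * (b - a) / (2 * (N' : ℝ))) :
    IsLeast {c : ℝ | ∃ f : ℝ → ℝ, f ∈ Vspace a b N' ∧ f xr = 1 ∧ c = ipNorm a b f}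
      (ipNorm a b (fun x => Kwl a b N' x r / Kwl a b N' xr r)) := by
  have hL : b - a ≠ 0 := sub_ne_zero.2 hab.ne'
  have hNne : (N' : ℝ) ≠ 0 := Nat.cast_ne_zero.2 (by omega)
  have hx : ∀ k : ℕ, k ≠ 0 → Real.cos ((k : ℝ) * π * (xr - a) / (b - a))
      = Real.cos ((k : ℝ) * π * (2 * (r : ℝ) - 1) / (2 * (N' : ℝ))) := by
    intro k _
    congr 1
    rw [hxr]
    field_simp
    ring
  set w : ℕ → ℝ := fun k => E a b k xr with hw
  have hK : ∀ x, Kwl a b N' x r = ∑ k ∈ Finset.range N', w k * E a b k x :=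
    fun x => Kwl_eq_sum a b N' hN' r x xr hx
  set κ := Kwl a b N' xr r with hκdef
  have hκ : κ = ∑ k ∈ Finset.range N', w k * w k := hK xr
  have hκpos : 0 < κ := by
    rw [hκ]
    have h0 : (0 : ℕ) ∈ Finset.range N' := Finset.mem_range.2 (by omega)
    have hw0 : w 0 * w 0 = 1 / 2 := by
      simp only [hw, E, if_pos rfl, if_true]
      rw [div_mul_div_comm, Real.mul_self_sqrt (by norm_num : (0:ℝ) ≤ 2)]
      norm_num
    calc (0 : ℝ) < 1 / 2 := by norm_num
      _ = w 0 * w 0 := hw0.symm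
      _ ≤ ∑ k ∈ Finset.range N', w k * w k :=
          Finset.single_le_sum (fun k _ => mul_self_nonneg (w k)) h0
  set g : ℝ → ℝ := fun x => Kwl a b N' x r / Kwl a b N' xr r with hg
  have hgsum : g = fun x => ∑ k ∈ Finset.range N', (w k / κ) * E a b k x := by
    funext x
    simp only [hg]
    rw [← hκdef, hK x, Finset.sum_div]
    exact Finset.sum_congr rfl fun k _ => by ring
  have hsκ : Real.sqrt κ * Real.sqrt κ = κ := Real.mul_self_sqrt hκpos.le
  have hsκpos : 0 < Real.sqrt κ := Real.sqrt_pos.2 hκpos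
  have hnormg : ipNorm a b g = 1 / Real.sqrt κ := by
    unfold ipNorm
    rw [hgsum, ip_sum_sum a b hab N']
    have : ∑ k ∈ Finset.range N', (w k / κ) * (w k / κ) = κ⁻¹ := by
      have : ∑ k ∈ Finset.range N', (w k / κ) * (w k / κ)
          = (∑ k ∈ Finset.range N', w k * w k) / (κ * κ) := by
        rw [Finset.sum_div]
        exact Finset.sum_congr rfl fun k _ => by ring
      rw [this, ← hκ]
      field_simp
    rw [this, Real.sqrt_inv, one_div]
  constructor
  · exact ⟨g, (mem_V_iff a b N' hN' g).2 ⟨fun i => w i / κ, by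
      funext x
      rw [Finset.sum_apply]
      simp only [Pi.smul_apply, smul_eq_mul]
      rw [hgsum]
      exact Fin.sum_univ_eq_sum_range (fun k => (w k / κ) * E a b k x) N'⟩,
      by simp only [hg]; rw [← hκdef]; exact div_self hκpos.ne', hnormg ▸ hnormg.symm ▸ rfl⟩
  · rintro c ⟨f, hfV, hfxr, rfl⟩
    obtain ⟨cf, hcf⟩ := (mem_V_iff a b N' hN' f).1 hfV
    set cc : ℕ → ℝ := fun k => if h : k < N' then cf ⟨k, h⟩ else 0 with hccdef
    have hfx : ∀ x, f x = ∑ k ∈ Finset.range N', cc k * E a b k x := by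
      intro x
      rw [← hcf, Finset.sum_apply]
      simp only [Pi.smul_apply, smul_eq_mul]
      rw [← Fin.sum_univ_eq_sum_range (fun k => cc k * E a b k x) N']
      refine Finset.sum_congr rfl fun i _ => ?_
      simp only [hccdef, i.2, dif_pos, Fin.eta]
    have hipf : ip a b f f = ∑ k ∈ Finset.range N', cc k * cc k := by
      have hfe : f = fun x => ∑ k ∈ Finset.range N', cc k * E a b k x := funext hfx
      rw [hfe, ip_sum_sum a b hab N']
    have h1 : ∑ k ∈ Finset.range N', cc k * w k = 1 := by
      rw [← hfx xr] at *
      exact hfxr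
    have hCS := Real.sum_mul_le_sqrt_mul_sqrt (Finset.range N') cc w
    rw [h1] at hCS
    have hsq1 : ∑ k ∈ Finset.range N', cc k ^ 2 = ∑ k ∈ Finset.range N', cc k * cc k :=
      Finset.sum_congr rfl fun k _ => sq (cc k)
    have hsq2 : ∑ k ∈ Finset.range N', w k ^ 2 = ∑ k ∈ Finset.range N', w k * w k :=
      Finset.sum_congr rfl fun k _ => sq (w k)
    rw [hsq1, hsq2, ← hκ, ← hipf] at hCS
    have : ipNorm a b f = Real.sqrt (ip a b f f) := rfl
    rw [hnormg, div_le_iff₀ hsκpos, this]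
    linarith [hCS]

end
end

section
/- Let a < b be real numbers and N' ≥ 1 an integer, and let V_{N'} = span{1/√2, cos(kπ(y−a)/(b−a)) : k = 1,…,N'−1} ⊂ L²([a,b]). Then the N' functions {K^wl_{N'}(·, r) : r = 1,…,N'} form a basis of V_{N'}: they are linearly independent and their span equals V_{N'}. -/
open Real Finset

noncomputable section

lemma aux_sin_ne (N : ℕ) (hN : 0 < N) (m : ℤ) (h : ¬ ((2 * (N:ℤ)) ∣ m)) :
    Real.sin (π * m / (2 * N)) ≠ 0 := by
  rw [Real.sin_ne_zero_iff]
  intro n hn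
  apply h
  have hπ : (0:ℝ) < π := Real.pi_pos
  have hN0 : ((N:ℝ)) ≠ 0 := by positivity
  have : (m:ℝ) = 2 * N * n := by
    field_simp at hn
    nlinarith [hn]
  refine ⟨n, ?_⟩
  exact_mod_cast this

lemma aux_cos_sum (N : ℕ) (hN : 0 < N) (m : ℤ) (h : ¬ ((2 * (N:ℤ)) ∣ m)) :
    ∑ k ∈ Finset.Ico 1 N, Real.cos ((k:ℝ) * (π * m / N)) = (-(-1:ℝ)^m - 1) / 2 := by
  have hN0 : ((N:ℝ)) ≠ 0 := by positivity
  set θ : ℝ := π * m / N with hθ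
  have hhalf : θ / 2 = π * m / (2 * N) := by rw [hθ]; ring
  have hs : Real.sin (θ/2) ≠ 0 := by rw [hhalf]; exact aux_sin_ne N hN m h
  have key : ∀ k : ℕ, Real.sin (((k:ℝ)+1/2)*θ) - Real.sin (((k:ℝ)-1/2)*θ)
      = 2 * Real.sin (θ/2) * Real.cos ((k:ℝ) * θ) := by
    intro k
    rw [Real.sin_sub_sin]
    have h1 : (((k:ℝ)+1/2)*θ - ((k:ℝ)-1/2)*θ)/2 = θ/2 := by ring
    have h2 : (((k:ℝ)+1/2)*θ + ((k:ℝ)-1/2)*θ)/2 = (k:ℝ)*θ := by ring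
    rw [h1, h2]
  set g : ℕ → ℝ := fun j => Real.sin (((j:ℝ)+1/2)*θ) with hg
  have tele : ∑ k ∈ Finset.Ico 1 N,
      (Real.sin (((k:ℝ)+1/2)*θ) - Real.sin (((k:ℝ)-1/2)*θ))
      = g (N-1) - g 0 := by
    rw [Finset.sum_Ico_eq_sum_range]
    rw [← Finset.sum_range_sub g (N-1)]
    apply Finset.sum_congr rfl
    intro j _
    simp only [hg]
    have e2 : ((1+j:ℕ):ℝ) + 1/2 = ((j+1:ℕ):ℝ) + 1/2 := by push_cast; ring
    have e3 : ((1+j:ℕ):ℝ) - 1/2 = ((j:ℕ):ℝ) + 1/2 := by push_cast; ring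
    rw [e2, e3]
  have hend : g (N-1) = -((-1:ℝ)^m * Real.sin (θ/2)) := by
    simp only [hg]
    have hc : (((N-1:ℕ):ℝ)+1/2)*θ = (m:ℝ) * π - θ/2 := by
      have : ((N-1:ℕ):ℝ) = (N:ℝ) - 1 := by
        have : (1:ℕ) ≤ N := hN
        push_cast [Nat.cast_sub this]
        ring
      rw [this, hθ]
      field_simp
      ring
    rw [hc, Real.sin_int_mul_pi_sub]
  have main : 2 * Real.sin (θ/2) * (∑ k ∈ Finset.Ico 1 N, Real.cos ((k:ℝ) * θ))
      = (-(-1:ℝ)^m - 1) * Real.sin (θ/2) := by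
    calc 2 * Real.sin (θ/2) * (∑ k ∈ Finset.Ico 1 N, Real.cos ((k:ℝ) * θ))
        = ∑ k ∈ Finset.Ico 1 N, 2 * Real.sin (θ/2) * Real.cos ((k:ℝ) * θ) := by
          rw [Finset.mul_sum]
      _ = ∑ k ∈ Finset.Ico 1 N,
            (Real.sin (((k:ℝ)+1/2)*θ) - Real.sin (((k:ℝ)-1/2)*θ)) := by
          exact Finset.sum_congr rfl fun k _ => (key k).symm
      _ = g (N-1) - g 0 := tele
      _ = (-(-1:ℝ)^m - 1) * Real.sin (θ/2) := by
          have hg0 : g 0 = Real.sin (θ/2) := by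
            simp only [hg]
            norm_num
            congr 1
            ring
          rw [hend, hg0]; ring
  have h' : Real.sin (θ/2) * (2 * ∑ k ∈ Finset.Ico 1 N, Real.cos ((k:ℝ) * θ))
      = Real.sin (θ/2) * (-(-1:ℝ)^m - 1) := by linarith [main]
  have := mul_left_cancel₀ hs h'
  linarith


lemma aux_not_dvd (n m : ℤ) (h0 : m ≠ 0) (habs : |m| < n) : ¬ n ∣ m := by
  intro hd
  have := Int.le_of_dvd (abs_pos.mpr h0) ((dvd_abs n m).mpr hd)
  omega

lemma aux_kernel_eval (N : ℕ) (hN : 1 ≤ N) (r s : ℕ) (hr1 : 1 ≤ r) (hrN : r ≤ N)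
    (hs1 : 1 ≤ s) (hsN : s ≤ N) :
    (1/2 : ℝ) + ∑ k ∈ Finset.Ico 1 N,
      Real.cos ((k:ℝ) * π * (2*(s:ℝ)-1) / (2*(N:ℝ))) *
        Real.cos ((k:ℝ) * π * (2*(r:ℝ)-1) / (2*(N:ℝ)))
      = if r = s then (N:ℝ)/2 else 0 := by
  have hN0 : ((N:ℝ)) ≠ 0 := by positivity
  set m1 : ℤ := (s:ℤ) - r with hm1
  set m2 : ℤ := (s:ℤ) + r - 1 with hm2
  have hprod : ∀ k : ℕ, Real.cos ((k:ℝ) * π * (2*(s:ℝ)-1) / (2*(N:ℝ))) *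
        Real.cos ((k:ℝ) * π * (2*(r:ℝ)-1) / (2*(N:ℝ)))
      = (Real.cos ((k:ℝ) * (π * (m1:ℝ) / N)) + Real.cos ((k:ℝ) * (π * (m2:ℝ) / N))) / 2 := by
    intro k
    have h2 := Real.two_mul_cos_mul_cos ((k:ℝ) * π * (2*(s:ℝ)-1) / (2*(N:ℝ)))
      ((k:ℝ) * π * (2*(r:ℝ)-1) / (2*(N:ℝ)))
    have e1 : (k:ℝ) * π * (2*(s:ℝ)-1) / (2*(N:ℝ)) - (k:ℝ) * π * (2*(r:ℝ)-1) / (2*(N:ℝ))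
        = (k:ℝ) * (π * (m1:ℝ) / N) := by
      rw [hm1]; push_cast; field_simp; ring
    have e2 : (k:ℝ) * π * (2*(s:ℝ)-1) / (2*(N:ℝ)) + (k:ℝ) * π * (2*(r:ℝ)-1) / (2*(N:ℝ))
        = (k:ℝ) * (π * (m2:ℝ) / N) := by
      rw [hm2]; push_cast; field_simp; ring
    rw [e1, e2] at h2
    linarith
  rw [Finset.sum_congr rfl (fun k _ => hprod k)]
  have hsplit : ∑ k ∈ Finset.Ico 1 N,
      ((Real.cos ((k:ℝ) * (π * (m1:ℝ) / N)) + Real.cos ((k:ℝ) * (π * (m2:ℝ) / N))) / 2)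
      = ((∑ k ∈ Finset.Ico 1 N, Real.cos ((k:ℝ) * (π * (m1:ℝ) / N)))
        + (∑ k ∈ Finset.Ico 1 N, Real.cos ((k:ℝ) * (π * (m2:ℝ) / N)))) / 2 := by
    rw [← Finset.sum_add_distrib, Finset.sum_div]
  rw [hsplit]
  by_cases hrs : r = s
  · subst hrs
    simp only [if_pos rfl]
    have hm10 : (m1:ℝ) = 0 := by rw [hm1]; push_cast; ring
    have hsum1 : ∑ k ∈ Finset.Ico 1 N, Real.cos ((k:ℝ) * (π * (m1:ℝ) / N)) = ((N:ℝ) - 1) := by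
      rw [hm10]
      simp only [mul_zero, zero_div, mul_zero, Real.cos_zero]
      rw [Finset.sum_const, Nat.card_Ico]
      simp
      push_cast [Nat.cast_sub hN]
      ring
    have hodd2 : Odd m2 := ⟨(r:ℤ) - 1, by rw [hm2]; ring⟩
    have hnd2 : ¬ ((2 * (N:ℤ)) ∣ m2) := by
      apply aux_not_dvd
      · omega
      · rw [abs_lt]; omega
    have hsum2 := aux_cos_sum N hN m2 hnd2
    rw [hsum2, hodd2.neg_one_zpow]
    push_cast [Nat.cast_sub hN] at hsum1 ⊢
    rw [hsum1]
    ring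
  · simp only [if_neg hrs]
    have hne1 : m1 ≠ 0 := by omega
    have hnd1 : ¬ ((2 * (N:ℤ)) ∣ m1) := by
      apply aux_not_dvd _ _ hne1
      rw [abs_lt]; omega
    have hnd2 : ¬ ((2 * (N:ℤ)) ∣ m2) := by
      apply aux_not_dvd
      · omega
      · rw [abs_lt]; omega
    rw [aux_cos_sum N hN m1 hnd1, aux_cos_sum N hN m2 hnd2]
    have hpar : ((-1:ℝ))^m2 = -((-1:ℝ))^m1 := by
      have : m2 = m1 + (2*(r:ℤ) - 1) := by omega
      rw [this, zpow_add₀ (by norm_num : (-1:ℝ) ≠ 0)]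
      have hodd : Odd (2*(r:ℤ) - 1) := ⟨(r:ℤ) - 1, by ring⟩
      rw [hodd.neg_one_zpow]
      ring
    rw [hpar]
    ring

lemma aux_Kwl_eval (a b : ℝ) (hab : a < b) (N : ℕ) (hN : 1 ≤ N) (r s : ℕ)
    (hr1 : 1 ≤ r) (hrN : r ≤ N) (hs1 : 1 ≤ s) (hsN : s ≤ N) :
    Kwl a b N (a + (b-a)*(2*(s:ℝ)-1)/(2*(N:ℝ))) r = if r = s then (N:ℝ)/2 else 0 := by
  have hba : b - a ≠ 0 := sub_ne_zero.mpr hab.ne'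
  have hN0 : ((N:ℝ)) ≠ 0 := by positivity
  unfold Kwl
  rw [← aux_kernel_eval N hN r s hr1 hrN hs1 hsN]
  congr 1
  apply Finset.sum_congr rfl
  intro k _
  congr 2
  field_simp
  ring

/-- the `N'` scaling functions `{K^wl_{N'}(·, r) : r = 1,…,N'}` are linearly
independent and span `V_{N'}`, i.e. they form a basis of `V_{N'}`. -/
theorem stmt14 (a b : ℝ) (hab : a < b) (N' : ℕ) (hN' : 1 ≤ N') :
    LinearIndependent ℝ (fun r : Fin N' => (fun x => Kwl a b N' x ((r : ℕ) + 1) : ℝ → ℝ)) ∧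
    Submodule.span ℝ
        (Set.range fun r : Fin N' => (fun x => Kwl a b N' x ((r : ℕ) + 1) : ℝ → ℝ)) =
      Vspace a b N' := by
  have hba : b - a ≠ 0 := sub_ne_zero.mpr hab.ne'
  have hN0 : ((N':ℝ)) ≠ 0 := by
    have : 0 < N' := hN'
    positivity
  -- Linear independence
  have hli : LinearIndependent ℝ
      (fun r : Fin N' => (fun x => Kwl a b N' x ((r : ℕ) + 1) : ℝ → ℝ)) := by
    rw [Fintype.linearIndependent_iff]
    intro g hg s
    have hx := congrFun hg (a + (b-a)*(2*(((s:ℕ)+1:ℕ):ℝ)-1)/(2*(N':ℝ)))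
    simp only [Finset.sum_apply, Pi.smul_apply, smul_eq_mul, Pi.zero_apply] at hx
    have hval : ∀ r : Fin N',
        Kwl a b N' (a + (b-a)*(2*(((s:ℕ)+1:ℕ):ℝ)-1)/(2*(N':ℝ))) ((r:ℕ)+1)
        = if ((r:ℕ)+1) = ((s:ℕ)+1) then (N':ℝ)/2 else 0 := fun r =>
      aux_Kwl_eval a b hab N' hN' ((r:ℕ)+1) ((s:ℕ)+1)
        (by omega) (by omega) (by omega) (by omega)
    rw [Finset.sum_eq_single_of_mem s (Finset.mem_univ s)] at hx
    · rw [hval s, if_pos rfl] at hx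
      have hhalf : ((N':ℝ)/2) ≠ 0 := by positivity
      exact (mul_eq_zero.mp hx).resolve_right hhalf
    · intro r _ hrs
      rw [hval r, if_neg, mul_zero]
      simp only [add_left_inj]
      exact fun h => hrs (Fin.ext h)
  refine ⟨hli, ?_⟩
  -- span ⊆ Vspace
  have hsub : Submodule.span ℝ
      (Set.range fun r : Fin N' => (fun x => Kwl a b N' x ((r : ℕ) + 1) : ℝ → ℝ))
      ≤ Vspace a b N' := by
    rw [Submodule.span_le]
    rintro _ ⟨r, rfl⟩
    show (fun x => Kwl a b N' x ((r:ℕ)+1) : ℝ → ℝ) ∈ (Vspace a b N' : Set (ℝ → ℝ))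
    have h0 : (fun _ => 1 / Real.sqrt 2 : ℝ → ℝ) ∈ Vspace a b N' :=
      Submodule.subset_span (Or.inl rfl)
    have hk : ∀ k ∈ Finset.Ico 1 N',
        (fun y => Real.cos ((k : ℝ) * π * (y - a) / (b - a)) : ℝ → ℝ) ∈ Vspace a b N' :=
      fun k hkk => Submodule.subset_span (Or.inr ⟨k, hkk, rfl⟩)
    have heq : (fun x => Kwl a b N' x ((r:ℕ)+1) : ℝ → ℝ)
        = (1 / Real.sqrt 2) • (fun _ => 1 / Real.sqrt 2 : ℝ → ℝ)
          + ∑ k ∈ Finset.Ico 1 N',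
            (Real.cos ((k : ℝ) * π * (2 * (((r:ℕ)+1:ℕ):ℝ) - 1) / (2 * (N' : ℝ)))) •
              (fun y => Real.cos ((k : ℝ) * π * (y - a) / (b - a)) : ℝ → ℝ) := by
      funext x
      simp only [Kwl, Pi.add_apply, Pi.smul_apply, Finset.sum_apply, smul_eq_mul]
      have : 1 / Real.sqrt 2 * (1 / Real.sqrt 2) = 1/2 := by
        rw [div_mul_div_comm, Real.mul_self_sqrt (by norm_num : (0:ℝ) ≤ 2)]
        norm_num
      rw [this]
      congr 1
      apply Finset.sum_congr rfl
      intro k _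
      ring
    rw [heq]
    exact Submodule.add_mem _ (Submodule.smul_mem _ _ h0)
      (Submodule.sum_mem _ fun k hkk => Submodule.smul_mem _ _ (hk k hkk))
  -- Vspace ≤ span (range h) with h indexed by Fin N'
  set h : Fin N' → (ℝ → ℝ) := fun j =>
    if (j:ℕ) = 0 then (fun _ => 1 / Real.sqrt 2)
    else (fun y => Real.cos (((j:ℕ) : ℝ) * π * (y - a) / (b - a))) with hh
  have hVh : Vspace a b N' ≤ Submodule.span ℝ (Set.range h) := by
    rw [Vspace, Submodule.span_le]
    rintro g (rfl | ⟨k, hkk, rfl⟩)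
    · apply Submodule.subset_span
      refine ⟨⟨0, by omega⟩, ?_⟩
      simp [hh]
    · apply Submodule.subset_span
      have hk1 : 1 ≤ k := (Finset.mem_Ico.mp hkk).1
      have hkN : k < N' := (Finset.mem_Ico.mp hkk).2
      have hk0 : k ≠ 0 := by omega
      refine ⟨⟨k, hkN⟩, ?_⟩
      simp [hh, hk0]
  have hfd : FiniteDimensional ℝ (Submodule.span ℝ (Set.range h)) :=
    FiniteDimensional.span_of_finite ℝ (Set.finite_range h)
  have hfdV : FiniteDimensional ℝ (Vspace a b N') :=
    Submodule.finiteDimensional_of_le hVh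
  have hrankV : Module.finrank ℝ (Vspace a b N') ≤ N' := by
    calc Module.finrank ℝ (Vspace a b N')
        ≤ Module.finrank ℝ (Submodule.span ℝ (Set.range h)) := Submodule.finrank_mono hVh
      _ ≤ Fintype.card (Fin N') := finrank_range_le_card h
      _ = N' := Fintype.card_fin N'
  have hrankW : Module.finrank ℝ (Submodule.span ℝ
      (Set.range fun r : Fin N' => (fun x => Kwl a b N' x ((r : ℕ) + 1) : ℝ → ℝ))) = N' := by
    rw [finrank_span_eq_card hli, Fintype.card_fin]
  exact Submodule.eq_of_le_of_finrank_le hsub (by rw [hrankW]; exact hrankV)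

end
end

section
/- Let a < b be real numbers and N' ≥ 1 an integer, and let V_{N'} = span{1/√2, cos(kπ(y−a)/(b−a)) : k = 1,…,N'−1}. Then for every v ∈ V_{N'} and every r ∈ {1,…,N'}, ⟨v, K^wl_{N'}(·, r)⟩_{L²([a,b])} = v(a + (2r−1)(b−a)/(2N')), i.e., K^wl_{N'} acts as a reproducing kernel (kernel polynomial) on V_{N'} at the nodes x_r = a + (2r−1)(b−a)/(2N'). -/
open Real Finset

noncomputable section

/-- The integral of `cos (mπ(y−a)/(b−a))` over `[a,b]` vanishes for nonzero integer `m`. -/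
lemma int_cos_zero (a b : ℝ) (hab : a < b) (m : ℤ) (hm : m ≠ 0) :
    ∫ y in a..b, Real.cos ((m : ℝ) * π * (y - a) / (b - a)) = 0 := by
  have hL : b - a ≠ 0 := sub_ne_zero.2 hab.ne'
  have hc : (m : ℝ) * π / (b - a) ≠ 0 := by
    apply div_ne_zero _ hL
    exact mul_ne_zero (Int.cast_ne_zero.2 hm) Real.pi_ne_zero
  have key : ∀ y : ℝ, (m : ℝ) * π * (y - a) / (b - a)
      = ((m : ℝ) * π / (b - a)) * y + (-((m : ℝ) * π / (b - a)) * a) := by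
    intro y; field_simp; ring
  simp only [key]
  rw [intervalIntegral.integral_comp_mul_add Real.cos hc]
  have h1 : (m : ℝ) * π / (b - a) * a + -((m : ℝ) * π / (b - a)) * a = 0 := by ring
  have h2 : (m : ℝ) * π / (b - a) * b + -((m : ℝ) * π / (b - a)) * a = (m : ℝ) * π := by
    field_simp; ring
  rw [h1, h2, integral_cos, Real.sin_int_mul_pi, Real.sin_zero]
  simp

lemma orth (a b : ℝ) (hab : a < b) (j k : ℕ) (hj : 1 ≤ j) (hk : 1 ≤ k) :
    ∫ y in a..b, Real.cos ((j : ℝ) * π * (y - a) / (b - a)) *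
      Real.cos ((k : ℝ) * π * (y - a) / (b - a))
      = if j = k then (b - a) / 2 else 0 := by
  have key : ∀ y : ℝ, Real.cos ((j : ℝ) * π * (y - a) / (b - a)) *
      Real.cos ((k : ℝ) * π * (y - a) / (b - a))
      = (Real.cos ((((j : ℤ) - (k : ℤ) : ℤ) : ℝ) * π * (y - a) / (b - a))
        + Real.cos ((((j : ℤ) + (k : ℤ) : ℤ) : ℝ) * π * (y - a) / (b - a))) / 2 := by
    intro y
    have := Real.two_mul_cos_mul_cos ((j : ℝ) * π * (y - a) / (b - a))
      ((k : ℝ) * π * (y - a) / (b - a))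
    push_cast
    have e1 : (j : ℝ) * π * (y - a) / (b - a) - (k : ℝ) * π * (y - a) / (b - a)
        = ((j : ℝ) - (k : ℝ)) * π * (y - a) / (b - a) := by ring
    have e2 : (j : ℝ) * π * (y - a) / (b - a) + (k : ℝ) * π * (y - a) / (b - a)
        = ((j : ℝ) + (k : ℝ)) * π * (y - a) / (b - a) := by ring
    rw [e1, e2] at this
    linarith
  simp only [key]
  have hi1 : IntervalIntegrable
      (fun y => Real.cos ((((j : ℤ) - (k : ℤ) : ℤ) : ℝ) * π * (y - a) / (b - a))) MeasureTheory.volume a b := by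
    apply Continuous.intervalIntegrable; fun_prop
  have hi2 : IntervalIntegrable
      (fun y => Real.cos ((((j : ℤ) + (k : ℤ) : ℤ) : ℝ) * π * (y - a) / (b - a))) MeasureTheory.volume a b := by
    apply Continuous.intervalIntegrable; fun_prop
  rw [intervalIntegral.integral_div, intervalIntegral.integral_add hi1 hi2]
  have hsum : ∫ y in a..b, Real.cos ((((j : ℤ) + (k : ℤ) : ℤ) : ℝ) * π * (y - a) / (b - a)) = 0 :=
    int_cos_zero a b hab _ (by omega)
  rw [hsum]
  by_cases h : j = k
  · subst h
    simp only [sub_self, Int.cast_zero, zero_mul, zero_div, Real.cos_zero, if_pos rfl]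
    rw [intervalIntegral.integral_const]
    simp [smul_eq_mul]
  · rw [int_cos_zero a b hab _ (by omega : (j : ℤ) - (k : ℤ) ≠ 0), if_neg h]
    simp

/-- `K^wl_{N'}` acts as a reproducing kernel on `V_{N'}` at the nodes
`x_r = a + (2r−1)(b−a)/(2N')`: for `v ∈ V_{N'}`, `⟨v, K^wl_{N'}(·, r)⟩ = v(x_r)`. -/
theorem stmt15 (a b : ℝ) (hab : a < b) (N' : ℕ) (hN' : 1 ≤ N')
    (v : ℝ → ℝ) (hv : v ∈ Vspace a b N') (r : ℕ) (hr : 1 ≤ r) (hr' : r ≤ N') :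
    ip a b v (fun x => Kwl a b N' x r) =
      v (a + (2 * (r : ℝ) - 1) * (b - a) / (2 * (N' : ℝ))) := by
  have hL : (0:ℝ) < b - a := sub_pos.2 hab
  set xr : ℝ := a + (2 * (r : ℝ) - 1) * (b - a) / (2 * (N' : ℝ)) with hxr
  set K : ℝ → ℝ := fun x => Kwl a b N' x r with hK
  have hKcont : Continuous K := by
    unfold K; unfold Kwl
    apply Continuous.add continuous_const
    apply continuous_finset_sum
    intro k _
    fun_prop
  -- key computation for generators
  have hNpos : (0:ℝ) < (N' : ℝ) := by exact_mod_cast hN'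
  have hgen : ∀ f ∈ ({fun _ => 1 / Real.sqrt 2} ∪
      {g | ∃ k ∈ Finset.Ico 1 N', g = fun y => Real.cos ((k : ℝ) * π * (y - a) / (b - a))} :
        Set (ℝ → ℝ)), Continuous f ∧ ip a b f K = f xr := by
    rintro f (hf | ⟨k, hk, rfl⟩)
    · -- constant
      simp only [Set.mem_singleton_iff] at hf
      subst hf
      refine ⟨continuous_const, ?_⟩
      unfold ip
      unfold K; unfold Kwl
      have hsplit : ∀ y : ℝ, (1 / Real.sqrt 2) * (1 / 2 + ∑ k ∈ Finset.Ico 1 N',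
          Real.cos ((k : ℝ) * π * (y - a) / (b - a)) *
            Real.cos ((k : ℝ) * π * (2 * (r : ℝ) - 1) / (2 * (N' : ℝ))))
          = (1 / Real.sqrt 2) * (1/2) + ∑ k ∈ Finset.Ico 1 N',
            (1 / Real.sqrt 2) * Real.cos ((k : ℝ) * π * (2 * (r : ℝ) - 1) / (2 * (N' : ℝ))) *
              Real.cos ((k : ℝ) * π * (y - a) / (b - a)) := by
        intro y; rw [mul_add, Finset.mul_sum]; congr 1; apply Finset.sum_congr rfl; intros; ring
      simp only [hsplit]
      rw [intervalIntegral.integral_add (by apply Continuous.intervalIntegrable; fun_prop)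
        (by apply Continuous.intervalIntegrable; apply continuous_finset_sum; intros; fun_prop),
        intervalIntegral.integral_finset_sum (fun k _ => by
          apply Continuous.intervalIntegrable; fun_prop)]
      have hz : ∀ k ∈ Finset.Ico 1 N', ∫ y in a..b,
          (1 / Real.sqrt 2) * Real.cos ((k : ℝ) * π * (2 * (r : ℝ) - 1) / (2 * (N' : ℝ))) *
            Real.cos ((k : ℝ) * π * (y - a) / (b - a)) = 0 := by
        intro k hk
        rw [intervalIntegral.integral_const_mul]
        have : ∫ y in a..b, Real.cos ((k : ℝ) * π * (y - a) / (b - a)) = 0 := by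
          have := int_cos_zero a b hab (k : ℤ) (by
            simp at hk; omega)
          simpa using this
        rw [this, mul_zero]
      rw [Finset.sum_eq_zero hz, add_zero, intervalIntegral.integral_const]
      simp only [smul_eq_mul]
      field_simp
    · -- cosine generator
      refine ⟨by fun_prop, ?_⟩
      unfold ip
      unfold K; unfold Kwl
      simp only [Finset.mem_Ico] at hk
      have hsplit : ∀ y : ℝ, Real.cos ((k : ℝ) * π * (y - a) / (b - a)) * (1 / 2 + ∑ j ∈ Finset.Ico 1 N',
          Real.cos ((j : ℝ) * π * (y - a) / (b - a)) *
            Real.cos ((j : ℝ) * π * (2 * (r : ℝ) - 1) / (2 * (N' : ℝ))))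
          = (1/2) * Real.cos ((k : ℝ) * π * (y - a) / (b - a)) + ∑ j ∈ Finset.Ico 1 N',
            Real.cos ((j : ℝ) * π * (2 * (r : ℝ) - 1) / (2 * (N' : ℝ))) *
              (Real.cos ((k : ℝ) * π * (y - a) / (b - a)) * Real.cos ((j : ℝ) * π * (y - a) / (b - a))) := by
        intro y; rw [mul_add, Finset.mul_sum]; congr 1; · ring
        apply Finset.sum_congr rfl; intros; ring
      simp only [hsplit]
      rw [intervalIntegral.integral_add (by apply Continuous.intervalIntegrable; fun_prop)
        (by apply Continuous.intervalIntegrable; apply continuous_finset_sum; intros; fun_prop),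
        intervalIntegral.integral_finset_sum (fun j _ => by
          apply Continuous.intervalIntegrable; fun_prop)]
      have h0 : ∫ y in a..b, (1/2 : ℝ) * Real.cos ((k : ℝ) * π * (y - a) / (b - a)) = 0 := by
        rw [intervalIntegral.integral_const_mul]
        have := int_cos_zero a b hab (k : ℤ) (by omega)
        simp only [Int.cast_natCast] at this
        rw [this, mul_zero]
      rw [h0, zero_add]
      have hsum : ∑ j ∈ Finset.Ico 1 N', ∫ y in a..b,
          Real.cos ((j : ℝ) * π * (2 * (r : ℝ) - 1) / (2 * (N' : ℝ))) *
            (Real.cos ((k : ℝ) * π * (y - a) / (b - a)) * Real.cos ((j : ℝ) * π * (y - a) / (b - a)))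
          = Real.cos ((k : ℝ) * π * (2 * (r : ℝ) - 1) / (2 * (N' : ℝ))) * ((b - a) / 2) := by
        rw [Finset.sum_eq_single_of_mem k (Finset.mem_Ico.2 hk)]
        · rw [intervalIntegral.integral_const_mul, orth a b hab k k hk.1 hk.1, if_pos rfl]
        · intro j hj hjk
          simp only [Finset.mem_Ico] at hj
          rw [intervalIntegral.integral_const_mul, orth a b hab k j hk.1 hj.1,
            if_neg (fun h => hjk h.symm), mul_zero]
      rw [hsum]
      have hxreq : (k : ℝ) * π * (xr - a) / (b - a)
          = (k : ℝ) * π * (2 * (r : ℝ) - 1) / (2 * (N' : ℝ)) := by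
        rw [hxr]
        field_simp
        ring
      rw [hxreq]
      field_simp
  -- induction over the span
  unfold Vspace at hv
  refine (Submodule.span_induction
    (p := fun f _ => Continuous f ∧ ip a b f K = f xr) hgen ?_ ?_ ?_ hv).2
  · constructor
    · exact continuous_const
    · unfold ip; simp
  · rintro f g _ _ ⟨hfc, hf⟩ ⟨hgc, hg⟩
    refine ⟨hfc.add hgc, ?_⟩
    unfold ip at *
    have : ∫ y in a..b, (f + g) y * K y = (∫ y in a..b, f y * K y) + ∫ y in a..b, g y * K y := by
      rw [← intervalIntegral.integral_add (f := fun y => f y * K y) (g := fun y => g y * K y) ((hfc.mul hKcont).intervalIntegrable a b)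
        ((hgc.mul hKcont).intervalIntegrable a b)]
      apply intervalIntegral.integral_congr
      intro y _; simp [add_mul]
    rw [this, mul_add, hf, hg]; simp
  · rintro c f _ ⟨hfc, hf⟩
    refine ⟨hfc.const_smul c, ?_⟩
    unfold ip at *
    have : ∫ y in a..b, (c • f) y * K y = c * ∫ y in a..b, f y * K y := by
      rw [← intervalIntegral.integral_const_mul]
      apply intervalIntegral.integral_congr
      intro y _; simp [mul_assoc]
    rw [this]
    simp only [Pi.smul_apply, smul_eq_mul]
    rw [← hf]; ring

end
end
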